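/- Let P_n be the path of order n ≥ 3 and let H be a connected simple graph of order m ≥ 1. Then the distinguishing index satisfies D'(P_n[H]) = 2. -/

import Mathlib

open SimpleGraph

/-- The lexicographic product of two simple graphs. -/
def lexProd {V W : Type*} (G : SimpleGraph V) (H : SimpleGraph W) :
    SimpleGraph (V × W) where
  Adj p q := G.Adj p.1 q.1 ∨ (p.1 = q.1 ∧ H.Adj p.2 q.2)
  symm := by
    constructor
    rintro p q (h | ⟨h1, h2⟩)
    · exact Or.inl h.symm
    · exact Or.inr ⟨h1.symm, h2.symm⟩
  loopless := by
    constructor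
    rintro p (h | ⟨_, h⟩)
    · exact G.loopless.irrefl _ h
    · exact H.loopless.irrefl _ h

/-- The distinguishing number: the least `d` such that there is a vertex labeling with `d`
labels preserved only by the identity automorphism. -/
noncomputable def distinguishingNumber {V : Type*} (G : SimpleGraph V) : ℕ :=
  sInf {d : ℕ | ∃ φ : V → Fin d,
    ∀ σ : G ≃g G, (∀ v, φ (σ v) = φ v) → ∀ v, σ v = v}

/-- The distinguishing index: the least `d` such that there is an edge labeling with `d`
labels preserved only by the identity automorphism. -/
noncomputable def distinguishingIndex {V : Type*} (G : SimpleGraph V) : ℕ :=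
  sInf {d : ℕ | ∃ ψ : G.edgeSet → Fin d,
    ∀ σ : G ≃g G, (∀ e, ψ (σ.mapEdgeSet e) = ψ e) → ∀ v, σ v = v}

/-- Every automorphism of `G[H]` is of wreath form, i.e. `Aut(G[H]) = Aut(G)[Aut(H)]`. -/
def wreathForm {V W : Type*} (G : SimpleGraph V) (H : SimpleGraph W) : Prop :=
  ∀ f : lexProd G H ≃g lexProd G H,
    ∃ (α : G ≃g G) (β : V → (H ≃g H)),
      ∀ p : V × W, f p = (α p.1, β (α p.1) p.2)

/-!
Reversing the path is a non-trivial automorphism of `P_n[H]`, so one label never suffices.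

For two labels, rank the vertices of `H` and give label `1` to the edges of `H` inside layer `0`
and to a staircase between consecutive layers: `(i, a) — (i + 1, b)` gets `1` iff `b < a` when
`i = 0` and `b ≤ a` otherwise. Automorphisms of `P_n[H]` preserve the `P_n`-degree of the layer
(`H` contributes less than `|V(H)|` to a degree), hence the end layers, so a label-preserving one
preserves at every vertex the numbers of `1`-edges to inner and to end layers. These counts fix
layer `0` pointwise: towards inner layers a vertex of layer `0` has as many `1`-edges as its rank,
and no vertex of layer `n - 1` has a `1`-edge to an end layer, which for connected `H` happens in
layer `0` only when `H` is a single vertex. Then, layer by layer, a vertex of layer `k + 1` is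
determined by its `1`-edges to the already fixed layer `k`.
-/

open SimpleGraph Finset

section LexProd

variable {V V' W : Type*} {G : SimpleGraph V} {G' : SimpleGraph V'} {H : SimpleGraph W}

@[simp] lemma lexProd_adj {p q : V × W} :
    (lexProd G H).Adj p q ↔ G.Adj p.1 q.1 ∨ p.1 = q.1 ∧ H.Adj p.2 q.2 := Iff.rfl

instance [DecidableEq V] [DecidableRel G.Adj] [DecidableRel H.Adj] :
    DecidableRel (lexProd G H).Adj :=
  fun _ _ => decidable_of_iff' _ lexProd_adj

def SimpleGraph.Iso.lexProdLeft (α : G ≃g G') (H : SimpleGraph W) :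
    lexProd G H ≃g lexProd G' H where
  toEquiv := α.toEquiv.prodCongr (Equiv.refl W)
  map_rel_iff' := by simp [α.map_adj_iff, α.injective.eq_iff]

variable [Fintype V] [Fintype W] [DecidableEq V] [DecidableRel G.Adj] [DecidableRel H.Adj]

lemma lexProd_degree (v : V × W) :
    (lexProd G H).degree v = G.degree v.1 * Fintype.card W + H.degree v.2 := by
  obtain ⟨i, x⟩ := v
  have hdisj : Disjoint (G.neighborFinset i ×ˢ univ) ({i} ×ˢ H.neighborFinset x) := by
    simp only [Finset.disjoint_left, mem_product, mem_neighborFinset, mem_singleton]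
    rintro ⟨j, y⟩ ⟨hij, -⟩ ⟨rfl, -⟩
    exact G.irrefl hij
  have hnbr : (lexProd G H).neighborFinset (i, x) =
      (G.neighborFinset i ×ˢ univ).disjUnion ({i} ×ˢ H.neighborFinset x) hdisj := by
    ext ⟨j, y⟩
    simp [eq_comm, and_comm]
  simp only [← card_neighborFinset_eq_degree, hnbr, card_disjUnion, card_product, card_univ,
    card_singleton, one_mul]

/-- `H` contributes less than `|W|` to a degree in `G[H]`, so the `G`-degree is `deg / |W|`. -/
lemma SimpleGraph.Iso.degree_fst_lexProd (σ : lexProd G H ≃g lexProd G H) (v : V × W) :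
    G.degree (σ v).1 = G.degree v.1 := by
  have hdeg (u : V × W) : G.degree u.1 = (lexProd G H).degree u / Fintype.card W := by
    have := degree_lt_card_verts (G := H) u.2
    rw [lexProd_degree]
    exact (Nat.div_eq_of_lt_le (by omega) (by rw [add_mul, one_mul]; omega)).symm
  rw [hdeg, hdeg v, σ.degree_eq]

end LexProd

section Path

instance (n : ℕ) : DecidableRel (pathGraph n).Adj :=
  fun _ _ => decidable_of_iff' _ pathGraph_adj

def pathGraphRev (n : ℕ) : pathGraph n ≃g pathGraph n where
  toEquiv := Fin.revPerm
  map_rel_iff' := by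
    intro i j
    simp only [Fin.revPerm_apply, pathGraph_adj, Fin.val_rev]
    omega

def IsPathEnd {n : ℕ} (i : Fin n) : Prop := i.val = 0 ∨ i.val = n - 1

instance {n : ℕ} : DecidablePred (IsPathEnd (n := n)) :=
  fun _ => inferInstanceAs (Decidable (_ ∨ _))

lemma pathGraph_degree_le_one_iff {n : ℕ} (i : Fin n) :
    (pathGraph n).degree i ≤ 1 ↔ IsPathEnd i := by
  rw [← card_neighborFinset_eq_degree, card_le_one, IsPathEnd]
  simp only [mem_neighborFinset, pathGraph_adj, Fin.ext_iff]
  constructor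
  · intro h
    by_contra! hi
    have := h ⟨i - 1, by omega⟩ (by simp; omega) ⟨i + 1, by omega⟩ (by simp)
    dsimp only at this
    omega
  · intro hi a ha b hb
    omega

lemma SimpleGraph.Iso.isPathEnd_fst_lexProd {W : Type*} [Fintype W] {H : SimpleGraph W}
    [DecidableRel H.Adj] {n : ℕ} (σ : lexProd (pathGraph n) H ≃g lexProd (pathGraph n) H)
    (v : Fin n × W) : IsPathEnd (σ v).1 ↔ IsPathEnd v.1 := by
  simp only [← pathGraph_degree_le_one_iff, σ.degree_fst_lexProd]

end Path

section Distinguishing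

variable {V : Type*}

def IsDistinguishingEdgeLabeling {α : Type*} (G : SimpleGraph V) (ψ : G.edgeSet → α) : Prop :=
  ∀ σ : G ≃g G, (∀ e, ψ (σ.mapEdgeSet e) = ψ e) → ∀ v, σ v = v

lemma distinguishingIndex_eq_two {G : SimpleGraph V} {ψ : G.edgeSet → Fin 2}
    (hψ : IsDistinguishingEdgeLabeling G ψ) (σ : G ≃g G) {v : V} (hv : σ v ≠ v) :
    distinguishingIndex G = 2 := by
  refine le_antisymm (Nat.sInf_le ⟨ψ, hψ⟩) (le_csInf ⟨2, ψ, hψ⟩ ?_)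
  rintro d ⟨φ, hφ⟩
  by_contra! hd
  have : Subsingleton (Fin d) := Fin.subsingleton_iff_le_one.mpr (by omega)
  exact hv (hφ σ (fun _ => Subsingleton.elim _ _) v)

/-- The labelling gives `1` to the edges of the spanning subgraph `L` and `0` to the others. -/
lemma exists_isDistinguishingEdgeLabeling_fin_two {G L : SimpleGraph V} (hLG : L ≤ G)
    (h : ∀ σ : G ≃g G, (∀ p q, L.Adj (σ p) (σ q) ↔ L.Adj p q) → ∀ v, σ v = v) :
    ∃ ψ : G.edgeSet → Fin 2, IsDistinguishingEdgeLabeling G ψ := by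
  classical
  refine ⟨fun e => if (e : Sym2 V) ∈ L.edgeSet then 1 else 0, fun σ hσ => h σ fun p q => ?_⟩
  by_cases hpq : G.Adj p q
  · have := hσ ⟨s(p, q), hpq⟩
    simp only [Iso.mapEdgeSet, Equiv.coe_fn_mk, Hom.mapEdgeSet, RelHom.coeFn_mk,
      RelIso.coe_fn_toEquiv, Sym2.map_mk, mem_edgeSet] at this
    split_ifs at this <;> simp_all
  · exact iff_of_false (fun h => hpq (σ.map_adj_iff.mp (hLG h))) (fun h => hpq (hLG h))

lemma SimpleGraph.Iso.card_filter_neighborFinset_apply [Fintype V] {G : SimpleGraph V}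
    [DecidableRel G.Adj] (σ : G ≃g G) {P : V → Prop} [DecidablePred P]
    (hP : ∀ v, P (σ v) ↔ P v) (v : V) :
    #{q ∈ G.neighborFinset (σ v) | P q} = #{q ∈ G.neighborFinset v | P q} :=
  (card_equiv σ.toEquiv fun q => by simp [hP, σ.map_adj_iff]).symm

end Distinguishing

section Staircase

variable {W : Type*} (H : SimpleGraph W) (n : ℕ) {m : ℕ} (r : W ≃ Fin m)

/-- Using `<` on the first step and `≤` on the later ones keeps the two end layers apart even
when `W` is a single vertex. -/
def IsStairStep {n : ℕ} (p q : Fin n × W) : Prop :=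
  q.1.val = p.1.val + 1 ∧ if p.1.val = 0 then r q.2 < r p.2 else r q.2 ≤ r p.2

instance {n : ℕ} : DecidableRel (IsStairStep (n := n) r) :=
  fun _ _ => inferInstanceAs (Decidable (_ ∧ _))

/-- The edges of label `1` in the distinguishing labelling of `P_n[H]`. -/
def stairGraph : SimpleGraph (Fin n × W) where
  Adj p q := (p.1.val = 0 ∧ q.1.val = 0 ∧ H.Adj p.2 q.2) ∨ IsStairStep r p q ∨ IsStairStep r q p
  symm := ⟨by
    rintro p q (⟨hp, hq, h⟩ | h | h)
    · exact Or.inl ⟨hq, hp, h.symm⟩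
    · exact Or.inr (Or.inr h)
    · exact Or.inr (Or.inl h)⟩
  loopless := ⟨by
    rintro p (⟨-, -, h⟩ | ⟨h, -⟩ | ⟨h, -⟩)
    · exact H.irrefl h
    all_goals omega⟩

instance [DecidableRel H.Adj] : DecidableRel (stairGraph H n r).Adj :=
  fun _ _ => inferInstanceAs (Decidable (_ ∨ _))

lemma stairGraph_adj {p q : Fin n × W} : (stairGraph H n r).Adj p q ↔
    (p.1.val = 0 ∧ q.1.val = 0 ∧ H.Adj p.2 q.2) ∨ IsStairStep r p q ∨ IsStairStep r q p :=
  Iff.rfl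

lemma stairGraph_le : stairGraph H n r ≤ lexProd (pathGraph n) H := by
  rintro ⟨i, x⟩ ⟨j, y⟩ (⟨hi, hj, h⟩ | ⟨h, -⟩ | ⟨h, -⟩)
  · exact Or.inr ⟨Fin.ext (hi.trans hj.symm), h⟩
  all_goals exact Or.inl (pathGraph_adj.mpr (by omega))

lemma card_filter_apply_lt [Fintype W] (a : Fin m) : #{y | r y < a} = a := by
  rw [card_equiv r (t := Iio a) (by simp), Fin.card_Iio]

lemma card_filter_le_apply [Fintype W] (a : Fin m) : #{y | a ≤ r y} = m - a := by
  rw [card_equiv r (t := Ici a) (by simp), Fin.card_Ici]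

variable {H n r}

lemma stairGraph_adj_succ {k : ℕ} {i j : Fin n} (hj : j.val = k) (hi : i.val = k + 1)
    (z w : W) :
    (stairGraph H n r).Adj (j, z) (i, w) ↔ if k = 0 then r w < r z else r w ≤ r z := by
  simp only [stairGraph_adj, IsStairStep, hi, hj]
  constructor
  · rintro (⟨-, h, -⟩ | ⟨-, h⟩ | ⟨h, -⟩)
    · omega
    · exact h
    · omega
  · exact fun h => Or.inr (Or.inl ⟨trivial, h⟩)

lemma stairGraph_adj_zero (hn : 0 < n) {x y : W} {j : Fin n} :
    (stairGraph H n r).Adj (⟨0, hn⟩, x) (j, y) ↔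
      (j.val = 0 ∧ H.Adj x y) ∨ (j.val = 1 ∧ r y < r x) := by
  simp [stairGraph_adj, IsStairStep]

lemma stairGraph_adj_last (hn : 3 ≤ n) {x y : W} {j : Fin n} :
    (stairGraph H n r).Adj (⟨n - 1, by omega⟩, x) (j, y) ↔ j.val = n - 2 ∧ r x ≤ r y := by
  simp only [stairGraph_adj, IsStairStep]
  grind

variable [Fintype W] [DecidableRel H.Adj]

lemma card_stairGraph_inner_zero (hn : 3 ≤ n) (x : W) :
    #{q ∈ (stairGraph H n r).neighborFinset (⟨0, by omega⟩, x) | ¬IsPathEnd q.1} = r x := by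
  have : {q ∈ (stairGraph H n r).neighborFinset (⟨0, by omega⟩, x) | ¬IsPathEnd q.1} =
      ({⟨1, by omega⟩} : Finset (Fin n)) ×ˢ ({y | r y < r x} : Finset W) := by
    ext ⟨j, y⟩
    simp only [mem_filter, mem_neighborFinset, mem_product, mem_singleton, mem_univ, true_and]
    simp only [stairGraph_adj_zero, IsPathEnd, Fin.ext_iff]
    omega
  rw [this, card_product, card_singleton, one_mul, card_filter_apply_lt]

lemma card_stairGraph_inner_last (hn : 3 ≤ n) (x : W) :
    #{q ∈ (stairGraph H n r).neighborFinset (⟨n - 1, by omega⟩, x) | ¬IsPathEnd q.1} =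
      m - r x := by
  have : {q ∈ (stairGraph H n r).neighborFinset (⟨n - 1, by omega⟩, x) | ¬IsPathEnd q.1} =
      ({⟨n - 2, by omega⟩} : Finset (Fin n)) ×ˢ ({y | r x ≤ r y} : Finset W) := by
    ext ⟨j, y⟩
    simp only [mem_filter, mem_neighborFinset, mem_product, mem_singleton, mem_univ, true_and]
    simp only [stairGraph_adj_last hn, IsPathEnd, Fin.ext_iff]
    omega
  rw [this, card_product, card_singleton, one_mul, card_filter_le_apply]

lemma card_stairGraph_end_zero (hn : 3 ≤ n) (x : W) :
    #{q ∈ (stairGraph H n r).neighborFinset (⟨0, by omega⟩, x) | IsPathEnd q.1} =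
      H.degree x := by
  have : {q ∈ (stairGraph H n r).neighborFinset (⟨0, by omega⟩, x) | IsPathEnd q.1} =
      ({⟨0, by omega⟩} : Finset (Fin n)) ×ˢ H.neighborFinset x := by
    ext ⟨j, y⟩
    simp only [mem_filter, mem_neighborFinset, mem_product, mem_singleton]
    simp only [stairGraph_adj_zero, IsPathEnd, Fin.ext_iff]
    constructor
    · rintro ⟨h | h, hj⟩
      · exact h
      · omega
    · rintro ⟨hj, hxy⟩
      exact ⟨Or.inl ⟨hj, hxy⟩, Or.inl hj⟩
  rw [this, card_product, card_singleton, one_mul, card_neighborFinset_eq_degree]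

lemma card_stairGraph_end_last (hn : 3 ≤ n) (x : W) :
    #{q ∈ (stairGraph H n r).neighborFinset (⟨n - 1, by omega⟩, x) | IsPathEnd q.1} = 0 := by
  rw [card_eq_zero, filter_eq_empty_iff]
  rintro ⟨j, y⟩
  simp only [mem_neighborFinset, stairGraph_adj_last hn, IsPathEnd]
  omega

end Staircase

section Rigidity

variable {W : Type*} {H : SimpleGraph W} {n m : ℕ} {r : W ≃ Fin m}

lemma stairGraph_rigid_layer_zero [Fintype W] [DecidableRel H.Adj] (hH : H.Connected)
    (hn : 3 ≤ n) (σ : lexProd (pathGraph n) H ≃g lexProd (pathGraph n) H)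
    (hσ : ∀ p q, (stairGraph H n r).Adj (σ p) (σ q) ↔ (stairGraph H n r).Adj p q) (x : W) :
    σ (⟨0, by omega⟩, x) = (⟨0, by omega⟩, x) := by
  have h0 : 0 < n := by omega
  have hlast : n - 1 < n := by omega
  let τ : stairGraph H n r ≃g stairGraph H n r := ⟨σ.toEquiv, hσ _ _⟩
  have hinner := τ.card_filter_neighborFinset_apply (P := fun q => ¬IsPathEnd q.1)
    (fun v => (σ.isPathEnd_fst_lexProd v).not) (⟨0, h0⟩, x)
  have hend := τ.card_filter_neighborFinset_apply (P := fun q => IsPathEnd q.1)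
    σ.isPathEnd_fst_lexProd (⟨0, h0⟩, x)
  have hlayer : IsPathEnd (σ (⟨0, h0⟩, x)).1 := (σ.isPathEnd_fst_lexProd _).mpr (Or.inl rfl)
  rcases hq : σ (⟨0, h0⟩, x) with ⟨a, y⟩
  have hτ : τ (⟨0, h0⟩, x) = (a, y) := hq
  rw [hτ, card_stairGraph_inner_zero hn] at hinner
  rw [hτ] at hend
  rw [hq] at hlayer
  rcases hlayer with ha | ha
  · obtain rfl : a = ⟨0, h0⟩ := Fin.ext ha
    rw [card_stairGraph_inner_zero hn, Fin.val_inj, r.injective.eq_iff] at hinner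
    rw [hinner]
  · obtain rfl : a = ⟨n - 1, hlast⟩ := Fin.ext ha
    rw [card_stairGraph_inner_last hn] at hinner
    rw [card_stairGraph_end_last hn, card_stairGraph_end_zero hn] at hend
    have : Subsingleton W := not_nontrivial_iff_subsingleton.mp fun _ =>
      (hH.preconnected.degree_pos_of_nontrivial x).ne hend
    have hm : m ≤ 1 := by
      simpa [Fintype.card_congr r] using Fintype.card_le_one_iff_subsingleton.mpr this
    have := (r x).isLt
    omega

lemma stairGraph_rigid_layer_succ (σ : lexProd (pathGraph n) H ≃g lexProd (pathGraph n) H)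
    (hσ : ∀ p q, (stairGraph H n r).Adj (σ p) (σ q) ↔ (stairGraph H n r).Adj p q) {k : ℕ}
    (hfix : ∀ j : Fin n, j.val ≤ k → ∀ z, σ (j, z) = (j, z)) {i : Fin n} (hi : i.val = k + 1)
    (x : W) : σ (i, x) = (i, x) := by
  let j : Fin n := ⟨k, by omega⟩
  rcases hq : σ (i, x) with ⟨a, y⟩
  obtain rfl : a = i := by
    have hadj : (lexProd (pathGraph n) H).Adj (j, x) (a, y) := by
      rw [← hq, ← hfix j le_rfl x, σ.map_adj_iff]
      exact Or.inl (pathGraph_adj.mpr (Or.inl hi.symm))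
    have hlow : ¬a.val ≤ k := fun ha => by
      have hia : i = a := congrArg Prod.fst (σ.injective (hq.trans (hfix a ha y).symm))
      subst hia
      omega
    rcases hadj with h | ⟨h, -⟩
    · rw [pathGraph_adj] at h
      dsimp only [j] at h
      ext
      omega
    · exact absurd (congrArg Fin.val h) (by simp only [j]; omega)
  have key (z : W) :
      (stairGraph H n r).Adj (j, z) (a, y) ↔ (stairGraph H n r).Adj (j, z) (a, x) := by
    have := hσ (j, z) (a, x)
    rwa [hfix j le_rfl z, hq] at this
  simp only [stairGraph_adj_succ (show j.val = k from rfl) hi] at key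
  obtain rfl : y = x := by
    rw [← r.injective.eq_iff]
    split_ifs at key
    · exact eq_of_forall_gt_iff fun c => by simpa using key (r.symm c)
    · exact eq_of_forall_ge_iff fun c => by simpa using key (r.symm c)
  rfl

lemma stairGraph_rigid [Fintype W] [DecidableRel H.Adj] (hH : H.Connected) (hn : 3 ≤ n)
    (σ : lexProd (pathGraph n) H ≃g lexProd (pathGraph n) H)
    (hσ : ∀ p q, (stairGraph H n r).Adj (σ p) (σ q) ↔ (stairGraph H n r).Adj p q)
    (v : Fin n × W) : σ v = v := by
  suffices ∀ k, ∀ i : Fin n, i.val ≤ k → ∀ x, σ (i, x) = (i, x) from this _ v.1 le_rfl v.2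
  intro k
  induction k with
  | zero =>
    have h0 : 0 < n := by omega
    intro i hi x
    obtain rfl : i = ⟨0, h0⟩ := Fin.ext (Nat.le_zero.mp hi)
    exact stairGraph_rigid_layer_zero hH hn σ hσ x
  | succ k ih =>
    intro i hi x
    rcases Nat.lt_or_ge i.val (k + 1) with hlt | hge
    · exact ih i (by omega) x
    · exact stairGraph_rigid_layer_succ σ hσ ih (by omega) x

end Rigidity

theorem stmt14 {W : Type*} [Fintype W] (H : SimpleGraph W) (hH : H.Connected)
    (hW : 1 ≤ Fintype.card W) (n : ℕ) (hn : 3 ≤ n) :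
    distinguishingIndex (lexProd (SimpleGraph.pathGraph n) H) = 2 := by
  classical
  obtain ⟨w⟩ : Nonempty W := Fintype.card_pos_iff.mp hW
  obtain ⟨ψ, hψ⟩ := exists_isDistinguishingEdgeLabeling_fin_two
    (stairGraph_le H n (Fintype.equivFin W)) (stairGraph_rigid hH hn)
  refine distinguishingIndex_eq_two hψ ((pathGraphRev n).lexProdLeft H)
    (v := (⟨0, by omega⟩, w)) ?_
  simp [Iso.lexProdLeft, pathGraphRev, Fin.ext_iff]
  omega
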